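/- Let p ∈ [1,∞], B > 0, ω ∈ ℝ and f ∈ PW_B^p. Then the function x ↦ |𝒢f(x,ω)|² belongs to PW_{2B}^q, where q ∈ [1,∞] satisfies 1 + 1/q = 2/p. -/

import Mathlib

open MeasureTheory Complex Real

/-- Membership in the Paley–Wiener space `PW_B^p`: `f = ℱF` for some
`F ∈ L^p([-B,B])` extended by zero to `ℝ`. -/
def PW (B : ℝ) (p : ENNReal) (f : ℝ → ℂ) : Prop :=
  ∃ F : ℝ → ℂ,
    MemLp F p (volume.restrict (Set.Icc (-B) B)) ∧
    (∀ t ∉ Set.Icc (-B) B, F t = 0) ∧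
    ∀ x : ℝ, f x = ∫ t : ℝ, F t * Complex.exp (-2*(π:ℂ)*Complex.I*(t:ℂ)*(x:ℂ))

/-- The Gabor transform `𝒢f(x,ω) = 2^{1/4} ∫ f(t) e^{-π(t-x)²} e^{-2πitω} dt`. -/
noncomputable def gabor (f : ℝ → ℂ) (x ω : ℝ) : ℂ :=
  (((2:ℝ)^((1:ℝ)/4) : ℝ) : ℂ) *
    ∫ t : ℝ, f t * Complex.exp (-(π:ℂ)*((t:ℂ)-(x:ℂ))^2) *
      Complex.exp (-2*(π:ℂ)*Complex.I*(t:ℂ)*(ω:ℂ))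

/-!
Write `f = 𝓕 F` with `F ∈ L^p` supported in `[-B, B]`. Fubini and the Fourier transform of the
Gaussian give `𝒢f(x, ω) = e^{-2πixω} 𝓕 F_ω (x)` with `F_ω = F · φ(· + ω)`, hence
`|𝒢f(x, ω)|² = 𝓕 F_ω (x) · conj (𝓕 F_ω (x)) = 𝓕 (F_ω ⋆ F_ω^#) (x)`. The convolution is supported
in `[-2B, 2B]`, and Young's inequality `‖F_ω ⋆ F_ω^#‖_q ≤ ‖F_ω‖_p ‖F_ω^#‖_p` (valid because
`1/p + 1/p = 1 + 1/q`) puts it in `L^q`.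
-/

open scoped ENNReal ComplexConjugate FourierTransform Convolution

section Young

variable {G : Type*} [MeasurableSpace G] [AddCommGroup G] {μ : Measure G}

theorem enorm_convolution_mul_le (f g : G → ℂ) (v : G) :
    ‖(f ⋆[ContinuousLinearMap.mul ℂ ℂ, μ] g) v‖ₑ ≤ ∫⁻ s, ‖f s‖ₑ * ‖g (v - s)‖ₑ ∂μ := by
  simpa only [convolution_def, ContinuousLinearMap.mul_apply', enorm_mul]
    using enorm_integral_le_lintegral_enorm (μ := μ) fun s => f s * g (v - s)

variable [MeasurableAdd₂ G] [MeasurableNeg G] [SFinite μ] [μ.IsAddLeftInvariant]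

theorem MeasureTheory.AEStronglyMeasurable.convolution_mul {f g : G → ℂ}
    (hf : AEStronglyMeasurable f μ) (hg : AEStronglyMeasurable g μ) :
    AEStronglyMeasurable (f ⋆[ContinuousLinearMap.mul ℂ ℂ, μ] g) μ :=
  (hf.convolution_integrand' _
    (hg.mono_ac (quasiMeasurePreserving_sub μ μ).absolutelyContinuous)).integral_prod_right'

theorem ENNReal.lintegral_lintegral_mul_comp_sub {f g : G → ℝ≥0∞} (hf : AEMeasurable f μ)
    (hg : AEMeasurable g μ) :
    ∫⁻ v, ∫⁻ s, f s * g (v - s) ∂μ ∂μ = (∫⁻ s, f s ∂μ) * ∫⁻ s, g s ∂μ := by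
  have hinner (s : G) : ∫⁻ v, f s * g (v - s) ∂μ = f s * ∫⁻ v, g v ∂μ := by
    simp_rw [sub_eq_neg_add]
    have hgs : AEMeasurable (fun v => g (-s + v)) μ :=
      hg.comp_quasiMeasurePreserving (measurePreserving_add_left μ (-s)).quasiMeasurePreserving
    rw [lintegral_const_mul'' _ hgs, lintegral_add_left_eq_self]
  rw [lintegral_lintegral_swap (hf.comp_snd.mul
    (hg.comp_quasiMeasurePreserving (quasiMeasurePreserving_sub μ μ)))]
  simp_rw [hinner]
  exact lintegral_mul_const'' _ hf

variable [μ.IsNegInvariant]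

theorem ENNReal.lintegral_mul_comp_sub_le {p r : ℝ} (hpr : p.HolderConjugate r)
    {f g : G → ℝ≥0∞} (hf : AEMeasurable f μ) (hg : AEMeasurable g μ) (v : G) :
    ∫⁻ s, f s * g (v - s) ∂μ ≤ (∫⁻ s, f s ^ p ∂μ) ^ p⁻¹ * (∫⁻ s, g s ^ r ∂μ) ^ r⁻¹ := by
  have := ENNReal.lintegral_mul_le_Lp_mul_Lq μ hpr hf
    (hg.comp_quasiMeasurePreserving (quasiMeasurePreserving_sub_left μ v))
  simpa only [Pi.mul_apply, Function.comp_apply, one_div,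
    lintegral_sub_left_eq_self (fun s => g s ^ r)] using this

/-- Hölder's inequality for three functions, applied to the factorization
`f s * g (v - s) = (f s ^ p * g (v - s) ^ r) ^ q⁻¹ * (f s ^ p) ^ (p⁻¹ - q⁻¹) * (g (v - s) ^ r) ^ b`
with `b = r⁻¹ - q⁻¹`; the three exponents sum to one. -/
theorem ENNReal.lintegral_mul_comp_sub_le_three {p r q : ℝ} (hp : 1 ≤ p) (hr : 1 ≤ r)
    (hq : 0 < q) (hpqr : p⁻¹ + r⁻¹ = 1 + q⁻¹) {f g : G → ℝ≥0∞} (hf : AEMeasurable f μ)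
    (hg : AEMeasurable g μ) (v : G) :
    ∫⁻ s, f s * g (v - s) ∂μ ≤ (∫⁻ s, f s ^ p * g (v - s) ^ r ∂μ) ^ q⁻¹
      * (∫⁻ s, f s ^ p ∂μ) ^ (p⁻¹ - q⁻¹) * (∫⁻ s, g s ^ r ∂μ) ^ (r⁻¹ - q⁻¹) := by
  have hp0 : 0 < p := zero_lt_one.trans_le hp
  have hr0 : 0 < r := zero_lt_one.trans_le hr
  have ha : 0 ≤ p⁻¹ - q⁻¹ := by linarith [inv_le_one_of_one_le₀ hr]
  have hb : 0 ≤ r⁻¹ - q⁻¹ := by linarith [inv_le_one_of_one_le₀ hp]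
  have hsplit (x y : ℝ≥0∞) :
      x * y = (x ^ p * y ^ r) ^ q⁻¹ * (x ^ p) ^ (p⁻¹ - q⁻¹) * (y ^ r) ^ (r⁻¹ - q⁻¹) := by
    rw [ENNReal.mul_rpow_of_nonneg _ _ (by positivity), ← ENNReal.rpow_mul, ← ENNReal.rpow_mul,
      ← ENNReal.rpow_mul, ← ENNReal.rpow_mul,
      show ∀ u v w z : ℝ≥0∞, u * v * w * z = u * w * (v * z) by intros; ring,
      ← ENNReal.rpow_add_of_nonneg _ _ (by positivity) (mul_nonneg hp0.le ha),
      ← ENNReal.rpow_add_of_nonneg _ _ (by positivity) (mul_nonneg hr0.le hb)]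
    rw [show p * q⁻¹ + p * (p⁻¹ - q⁻¹) = 1 by field_simp; ring,
      show r * q⁻¹ + r * (r⁻¹ - q⁻¹) = 1 by field_simp; ring, ENNReal.rpow_one, ENNReal.rpow_one]
  have hgv : AEMeasurable (fun s => g (v - s)) μ :=
    hg.comp_quasiMeasurePreserving (quasiMeasurePreserving_sub_left μ v)
  have h := ENNReal.lintegral_prod_norm_pow_le (μ := μ) Finset.univ
    (f := ![fun s => f s ^ p * g (v - s) ^ r, fun s => f s ^ p, fun s => g (v - s) ^ r])
    (p := ![q⁻¹, p⁻¹ - q⁻¹, r⁻¹ - q⁻¹]) ?_ ?_ ?_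
  · simpa only [Fin.prod_univ_three, Matrix.cons_val_zero, Matrix.cons_val_one,
      Matrix.cons_val_two, Matrix.head_cons, Matrix.tail_cons, ← hsplit,
      lintegral_sub_left_eq_self (fun s => g s ^ r)] using h
  · intro i _
    fin_cases i
    exacts [(hf.pow_const p).mul (hgv.pow_const r), hf.pow_const p, hgv.pow_const r]
  · simp only [Fin.sum_univ_three, Matrix.cons_val_zero, Matrix.cons_val_one,
      Matrix.cons_val_two, Matrix.head_cons, Matrix.tail_cons]
    linarith
  · intro i _
    fin_cases i
    exacts [inv_nonneg.2 hq.le, ha, hb]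

theorem ENNReal.lintegral_convolution_rpow_le {p r q : ℝ} (hp : 1 ≤ p) (hr : 1 ≤ r) (hq : 0 < q)
    (hpqr : p⁻¹ + r⁻¹ = 1 + q⁻¹) {f g : G → ℝ≥0∞} (hf : AEMeasurable f μ)
    (hg : AEMeasurable g μ) :
    ∫⁻ v, (∫⁻ s, f s * g (v - s) ∂μ) ^ q ∂μ
      ≤ ((∫⁻ s, f s ^ p ∂μ) ^ p⁻¹ * (∫⁻ s, g s ^ r ∂μ) ^ r⁻¹) ^ q := by
  have hp0 : 0 < p := zero_lt_one.trans_le hp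
  have hr0 : 0 < r := zero_lt_one.trans_le hr
  set Nf := ∫⁻ s, f s ^ p ∂μ
  set Ng := ∫⁻ s, g s ^ r ∂μ
  have ha : 0 ≤ (p⁻¹ - q⁻¹) * q := mul_nonneg (by linarith [inv_le_one_of_one_le₀ hr]) hq.le
  have hb : 0 ≤ (r⁻¹ - q⁻¹) * q := mul_nonneg (by linarith [inv_le_one_of_one_le₀ hp]) hq.le
  have hmeas : AEMeasurable (fun v => ∫⁻ s, f s ^ p * g (v - s) ^ r ∂μ) μ :=
    ((hf.pow_const p).comp_snd.mul ((hg.pow_const r).comp_quasiMeasurePreserving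
      (quasiMeasurePreserving_sub μ μ))).lintegral_prod_right'
  calc ∫⁻ v, (∫⁻ s, f s * g (v - s) ∂μ) ^ q ∂μ
      ≤ ∫⁻ v, ((∫⁻ s, f s ^ p * g (v - s) ^ r ∂μ) ^ q⁻¹
          * Nf ^ (p⁻¹ - q⁻¹) * Ng ^ (r⁻¹ - q⁻¹)) ^ q ∂μ := by
        gcongr with v
        exact ENNReal.lintegral_mul_comp_sub_le_three hp hr hq hpqr hf hg v
    _ = ∫⁻ v, (∫⁻ s, f s ^ p * g (v - s) ^ r ∂μ)
          * (Nf ^ (p⁻¹ - q⁻¹) * Ng ^ (r⁻¹ - q⁻¹)) ^ q ∂μ := by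
        congr 1 with v
        rw [mul_assoc, ENNReal.mul_rpow_of_nonneg _ _ hq.le, ← ENNReal.rpow_mul,
          inv_mul_cancel₀ hq.ne', ENNReal.rpow_one]
    _ = Nf * Ng * (Nf ^ (p⁻¹ - q⁻¹) * Ng ^ (r⁻¹ - q⁻¹)) ^ q := by
        rw [lintegral_mul_const'' _ hmeas,
          ENNReal.lintegral_lintegral_mul_comp_sub (hf.pow_const p) (hg.pow_const r)]
    _ = (Nf ^ p⁻¹ * Ng ^ r⁻¹) ^ q := by
        rw [ENNReal.mul_rpow_of_nonneg _ _ hq.le, ENNReal.mul_rpow_of_nonneg _ _ hq.le,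
          ← ENNReal.rpow_mul, ← ENNReal.rpow_mul, ← ENNReal.rpow_mul, ← ENNReal.rpow_mul,
          show p⁻¹ * q = 1 + (p⁻¹ - q⁻¹) * q by field_simp; ring,
          show r⁻¹ * q = 1 + (r⁻¹ - q⁻¹) * q by field_simp; ring,
          ENNReal.rpow_add_of_nonneg _ _ zero_le_one ha,
          ENNReal.rpow_add_of_nonneg _ _ zero_le_one hb, ENNReal.rpow_one, ENNReal.rpow_one]
        ring

/-- Young's convolution inequality. -/
theorem eLpNorm_convolution_mul_le {p r q : ℝ≥0∞} (hp : 1 ≤ p) (hr : 1 ≤ r) (hp' : p ≠ ∞)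
    (hr' : r ≠ ∞) (hpqr : p⁻¹ + r⁻¹ = 1 + q⁻¹) {f g : G → ℂ} (hf : AEStronglyMeasurable f μ)
    (hg : AEStronglyMeasurable g μ) :
    eLpNorm (f ⋆[ContinuousLinearMap.mul ℂ ℂ, μ] g) q μ ≤ eLpNorm f p μ * eLpNorm g r μ := by
  have hp0 : p ≠ 0 := (zero_lt_one.trans_le hp).ne'
  have hr0 : r ≠ 0 := (zero_lt_one.trans_le hr).ne'
  have hqinv : q⁻¹ ≠ ∞ := by
    intro h
    rw [h, add_top] at hpqr
    exact ENNReal.add_ne_top.2 ⟨ENNReal.inv_ne_top.2 hp0, ENNReal.inv_ne_top.2 hr0⟩ hpqr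
  have hpr : p.toReal⁻¹ + r.toReal⁻¹ = 1 + q.toReal⁻¹ := by
    have := congrArg ENNReal.toReal hpqr
    rwa [ENNReal.toReal_add (ENNReal.inv_ne_top.2 hp0) (ENNReal.inv_ne_top.2 hr0),
      ENNReal.toReal_add ENNReal.one_ne_top hqinv, ENNReal.toReal_inv, ENNReal.toReal_inv,
      ENNReal.toReal_inv, ENNReal.toReal_one] at this
  have hp1 : 1 ≤ p.toReal := by simpa using ENNReal.toReal_mono hp' hp
  have hr1 : 1 ≤ r.toReal := by simpa using ENNReal.toReal_mono hr' hr
  rw [eLpNorm_eq_lintegral_rpow_enorm_toReal hp0 hp',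
    eLpNorm_eq_lintegral_rpow_enorm_toReal hr0 hr', one_div, one_div]
  rcases eq_or_ne q ∞ with rfl | hq
  · have hconj : p.toReal.HolderConjugate r.toReal :=
      ⟨by simpa using hpr, by positivity, by positivity⟩
    rw [eLpNorm_exponent_top]
    exact essSup_le_of_ae_le _ <| .of_forall fun v => (enorm_convolution_mul_le f g v).trans
      (ENNReal.lintegral_mul_comp_sub_le hconj hf.enorm hg.enorm v)
  · have hq0' : q ≠ 0 := ENNReal.inv_ne_top.1 hqinv
    have hqr : 0 < q.toReal := ENNReal.toReal_pos hq0' hq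
    rw [eLpNorm_eq_lintegral_rpow_enorm_toReal hq0' hq, one_div]
    calc (∫⁻ v, ‖(f ⋆[ContinuousLinearMap.mul ℂ ℂ, μ] g) v‖ₑ ^ q.toReal ∂μ) ^ q.toReal⁻¹
        ≤ (∫⁻ v, (∫⁻ s, ‖f s‖ₑ * ‖g (v - s)‖ₑ ∂μ) ^ q.toReal ∂μ) ^ q.toReal⁻¹ := by
          gcongr with v
          exact enorm_convolution_mul_le f g v
      _ ≤ _ := by
          grw [ENNReal.lintegral_convolution_rpow_le hp1 hr1 hqr hpr hf.enorm hg.enorm]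
          rw [← ENNReal.rpow_mul, mul_inv_cancel₀ hqr.ne', ENNReal.rpow_one]

theorem MeasureTheory.MemLp.convolution_mul {p r q : ℝ≥0∞} (hp : 1 ≤ p) (hr : 1 ≤ r)
    (hp' : p ≠ ∞) (hr' : r ≠ ∞) (hpqr : p⁻¹ + r⁻¹ = 1 + q⁻¹) {f g : G → ℂ} (hf : MemLp f p μ)
    (hg : MemLp g r μ) : MemLp (f ⋆[ContinuousLinearMap.mul ℂ ℂ, μ] g) q μ :=
  ⟨hf.1.convolution_mul hg.1, (eLpNorm_convolution_mul_le hp hr hp' hr' hpqr hf.1 hg.1).trans_lt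
    (ENNReal.mul_lt_top hf.2 hg.2)⟩

end Young

theorem fourier_eq_integral_mul_cexp (F : ℝ → ℂ) (x : ℝ) :
    𝓕 F x = ∫ t, F t * cexp (-2 * π * I * t * x) := by
  rw [Real.fourier_real_eq_integral_exp_smul]
  congr 1 with t
  rw [smul_eq_mul, mul_comm]
  congr 2
  push_cast
  ring

theorem norm_cexp_neg_two_pi_I_mul (t x : ℝ) : ‖cexp (-2 * π * I * t * x)‖ = 1 := by
  rw [Complex.norm_exp]
  simp

/-- The involution `F ↦ F^#` of the paper. -/
noncomputable def conjNeg (F : ℝ → ℂ) (s : ℝ) : ℂ := conj (F (-s))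

theorem fourier_conjNeg (F : ℝ → ℂ) (x : ℝ) : 𝓕 (conjNeg F) x = conj (𝓕 F x) := by
  rw [fourier_eq_integral_mul_cexp, fourier_eq_integral_mul_cexp, ← integral_conj,
    ← integral_neg_eq_self]
  congr 1 with t
  simp only [conjNeg, neg_neg, map_mul, ← Complex.exp_conj]
  congr 2
  simp only [map_neg, map_ofNat, conj_ofReal, conj_I]
  push_cast
  ring

theorem MeasureTheory.MemLp.conjNeg {F : ℝ → ℂ} {p : ℝ≥0∞} (hF : MemLp F p) :
    MemLp (conjNeg F) p :=
  (hF.comp_measurePreserving (Measure.measurePreserving_neg volume)).star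

theorem support_conjNeg (F : ℝ → ℂ) : Function.support (conjNeg F) = -Function.support F := by
  ext s
  simp [conjNeg]

theorem integral_gaussian_sub_mul_cexp (x ξ : ℝ) :
    ∫ t : ℝ, cexp (-π * (t - x) ^ 2) * cexp (-2 * π * I * t * ξ)
      = cexp (-2 * π * I * x * ξ) * cexp (-π * ξ ^ 2) := by
  have hgauss := congrFun (fourier_gaussian_pi (b := 1) (by norm_num)) ξ
  simp only [mul_one, one_cpow, div_one, one_mul, fourier_eq_integral_mul_cexp] at hgauss
  rw [← integral_add_right_eq_self _ x, ← hgauss, ← integral_const_mul]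
  congr 1 with u
  simp only [← Complex.exp_add]
  congr 1
  push_cast
  ring

/-- The window `φ` of the Gabor transform. -/
noncomputable def gaussWindow (t : ℝ) : ℂ := ((2 : ℝ) ^ ((1 : ℝ) / 4) : ℝ) * cexp (-π * t ^ 2)

theorem continuous_gaussWindow : Continuous gaussWindow := by
  unfold gaussWindow
  fun_prop

theorem norm_gaussWindow_le (t : ℝ) : ‖gaussWindow t‖ ≤ (2 : ℝ) ^ ((1 : ℝ) / 4) := by
  rw [gaussWindow, norm_mul, Complex.norm_real, Real.norm_of_nonneg (by positivity),
    Complex.norm_exp]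
  refine mul_le_of_le_one_right (by positivity) (Real.exp_le_one_iff.2 ?_)
  have : (-(π : ℂ) * (t : ℂ) ^ 2).re = -(π * t ^ 2) := by norm_cast; ring
  rw [this, neg_nonpos]
  positivity

/-- `F_ω = F · T_{-ω}φ` in the paper's notation. -/
noncomputable def windowed (F : ℝ → ℂ) (ω : ℝ) (s : ℝ) : ℂ := F s * gaussWindow (s + ω)

theorem integrable_cexp_neg_pi_mul_sub_sq (x : ℝ) :
    Integrable fun t : ℝ => cexp (-π * (t - x) ^ 2) := by
  have h := (integrable_cexp_neg_mul_sq (b := π) (by simp [Real.pi_pos])).comp_sub_right x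
  simpa only [Function.comp_def, ofReal_sub] using h

theorem gabor_fourier {F : ℝ → ℂ} (hF : Integrable F) (x ω : ℝ) :
    gabor (𝓕 F) x ω = cexp (-2 * π * I * x * ω) * 𝓕 (windowed F ω) x := by
  set K : ℝ → ℝ → ℂ := fun t s =>
    F s * (cexp (-π * (t - x) ^ 2) * cexp (-2 * π * I * t * ((s + ω : ℝ) : ℂ)))
  have hK : Integrable (Function.uncurry K) (volume.prod volume) := by
    have hcont : Continuous fun z : ℝ × ℝ =>
        cexp (-π * (z.1 - x) ^ 2) * cexp (-2 * π * I * z.1 * ((z.2 + ω : ℝ) : ℂ)) := by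
      fun_prop
    refine ((integrable_cexp_neg_pi_mul_sub_sq x).norm.mul_prod hF.norm).mono'
      (hF.aestronglyMeasurable.comp_snd.mul hcont.aestronglyMeasurable) (.of_forall fun z => ?_)
    rw [Function.uncurry_apply_pair, norm_mul, norm_mul, norm_cexp_neg_two_pi_I_mul, mul_one,
      mul_comm]
  have hinner (t : ℝ) : 𝓕 F t * cexp (-π * (t - x) ^ 2) * cexp (-2 * π * I * t * ω)
      = ∫ s, K t s := by
    rw [fourier_eq_integral_mul_cexp, ← integral_mul_const, ← integral_mul_const]
    congr 1 with s
    have hchar : cexp (-2 * π * I * s * t) * cexp (-2 * π * I * t * ω)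
        = cexp (-2 * π * I * t * ((s + ω : ℝ) : ℂ)) := by
      rw [← Complex.exp_add]
      push_cast
      ring_nf
    linear_combination (F s * cexp (-π * (t - x) ^ 2)) * hchar
  have hgauss (s : ℝ) : ∫ t, K t s
      = F s * (cexp (-2 * π * I * x * ((s + ω : ℝ) : ℂ)) * cexp (-π * ((s + ω : ℝ) : ℂ) ^ 2)) := by
    rw [integral_const_mul, integral_gaussian_sub_mul_cexp]
  rw [gabor]
  simp_rw [hinner]
  rw [integral_integral_swap hK]
  simp_rw [hgauss]
  rw [fourier_eq_integral_mul_cexp, ← integral_const_mul, ← integral_const_mul]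
  congr 1 with s
  have hchar : cexp (-2 * π * I * x * ((s + ω : ℝ) : ℂ))
      = cexp (-2 * π * I * x * ω) * cexp (-2 * π * I * s * x) := by
    rw [← Complex.exp_add]
    push_cast
    ring_nf
  rw [windowed, gaussWindow, hchar]
  ring

theorem memLp_windowed {F : ℝ → ℂ} {p : ℝ≥0∞} (hF : MemLp F p) (ω : ℝ) :
    MemLp (windowed F ω) p :=
  hF.of_le_mul (c := (2 : ℝ) ^ ((1 : ℝ) / 4))
    (hF.1.mul (continuous_gaussWindow.comp (continuous_add_const ω)).aestronglyMeasurable)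
    (.of_forall fun s => by
      rw [windowed, norm_mul, mul_comm]
      exact mul_le_mul_of_nonneg_right (norm_gaussWindow_le _) (norm_nonneg _))

theorem ofReal_norm_gabor_sq {F : ℝ → ℂ} (hF : Integrable F) (x ω : ℝ) :
    ((‖gabor (𝓕 F) x ω‖ : ℝ) : ℂ) ^ 2
      = 𝓕 (windowed F ω ⋆[ContinuousLinearMap.mul ℂ ℂ] conjNeg (windowed F ω)) x := by
  have hFω := memLp_windowed (memLp_one_iff_integrable.2 hF) ω
  rw [Real.fourier_mul_convolution_eq (memLp_one_iff_integrable.1 hFω)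
    (memLp_one_iff_integrable.1 hFω.conjNeg), fourier_conjNeg, mul_conj', gabor_fourier hF,
    norm_mul, norm_cexp_neg_two_pi_I_mul, one_mul]

theorem support_convolution_conjNeg_subset {F : ℝ → ℂ} {B : ℝ}
    (hF : Function.support F ⊆ Set.Icc (-B) B) :
    Function.support (F ⋆[ContinuousLinearMap.mul ℂ ℂ] conjNeg F)
      ⊆ Set.Icc (-(2 * B)) (2 * B) := by
  refine (support_convolution_subset _).trans ?_
  rw [support_conjNeg]
  refine (Set.add_subset_add hF (Set.neg_subset_neg.2 hF)).trans ?_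
  rw [Set.neg_Icc, neg_neg]
  refine (Set.Icc_add_Icc_subset _ _ _ _).trans_eq ?_
  congr 1 <;> ring

theorem stmt9_general (p q : ENNReal) (hp : 1 ≤ p) (hq : 1 + 1/q = 2/p)
    (B : ℝ) (ω : ℝ) (f : ℝ → ℂ) (hf : PW B p f) :
    PW (2*B) q (fun x : ℝ => ((‖gabor f x ω‖ : ℝ) : ℂ)^2) := by
  obtain ⟨F, hFp, hFsupp, hfF⟩ := hf
  have hp' : p ≠ ∞ := by
    rintro rfl
    simp at hq
  have hpq : p⁻¹ + p⁻¹ = 1 + q⁻¹ := by rw [← two_mul, ← div_eq_mul_inv, ← hq, one_div]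
  have hsupp : Function.support F ⊆ Set.Icc (-B) B :=
    fun t ht => by_contra fun h => ht (hFsupp t h)
  have hFp' : MemLp F p := by
    rw [← Set.indicator_eq_self.2 hsupp]
    exact (memLp_indicator_iff_restrict measurableSet_Icc).2 hFp
  have hFint : Integrable F := by
    rw [← Set.indicator_eq_self.2 hsupp, integrable_indicator_iff measurableSet_Icc]
    exact hFp.integrable hp
  obtain rfl : f = 𝓕 F := funext fun x => (hfF x).trans (fourier_eq_integral_mul_cexp F x).symm
  have hFωp := memLp_windowed hFp' ω
  refine ⟨_, (hFωp.convolution_mul hp hp hp' hp' hpq hFωp.conjNeg).restrict _,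
    fun t ht => Function.notMem_support.1 fun h => ht ?_,
    fun x => (ofReal_norm_gabor_sq hFint x ω).trans (fourier_eq_integral_mul_cexp _ x)⟩
  exact support_convolution_conjNeg_subset
    ((Function.support_mul_subset_left _ _).trans hsupp) h

theorem stmt9 (p q : ENNReal) (hp : 1 ≤ p) (hq : 1 + 1/q = 2/p)
    (B : ℝ) (hB : 0 < B) (ω : ℝ) (f : ℝ → ℂ) (hf : PW B p f) :
    PW (2*B) q (fun x : ℝ => ((‖gabor f x ω‖ : ℝ) : ℂ)^2) :=
  stmt9_general p q hp hq B ω f hf
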